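/- Let h ∈ C_c⁺(ℂ) satisfy Sh = h (invariance under vertical Steiner symmetrization) and S_{α_j} h = h for a sequence of nonzero angles α_j → 0 in ℝ/(2πℤ). Then h = h*, its symmetric decreasing rearrangement. -/

import Mathlib

open MeasureTheory

noncomputable def sdr (f : ℝ → ℝ) (x : ℝ) : ℝ :=
  ∫ t in Set.Ioi (0:ℝ),
    if 2 * |x| < (volume {y : ℝ | t < f y}).toReal then (1:ℝ) else 0

noncomputable def steiner (g : ℂ → ℝ) (z : ℂ) : ℝ :=
  sdr (fun y : ℝ => g (z.re + y * Complex.I)) z.im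

noncomputable def rot (α : ℝ) (g : ℂ → ℝ) : ℂ → ℝ :=
  fun z => g (Complex.exp (-(α : ℂ) * Complex.I) * z)

noncomputable def steinerDir (α : ℝ) (g : ℂ → ℝ) : ℂ → ℝ :=
  rot α (steiner (rot (-α) g))

noncomputable def sdr2 (f : ℂ → ℝ) (z : ℂ) : ℝ :=
  ∫ t in Set.Ioi (0:ℝ),
    if Real.pi * ‖z‖ ^ 2 < (volume {w : ℂ | t < f w}).toReal
    then (1:ℝ) else 0

/-!
Invariance under `steiner` makes `h` symmetric under conjugation and decreasing in `|Im z|` on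
every vertical line. Invariance under `steinerDir α` is the same symmetry across the line at
angle `α`, and composing the two reflections shows that `h` is invariant under rotation by `2α`.
The invariant rotation angles form a closed subgroup of `ℝ` with arbitrarily small nonzero
elements, hence all of `ℝ`, so `h` is radial and decreasing in `‖z‖`. Its superlevel sets are then
discs: `π ‖z‖² < |{h > t}|` exactly when `t < h z`, and the layer-cake integral `sdr2 h` returns `h`.
-/

open MeasureTheory Set Filter Topology ComplexConjugate

section LayerCake

lemma setIntegral_Ioi_ite_one {P : ℝ → Prop} [DecidablePred P] (hP : MeasurableSet {t | P t}) :
    ∫ t in Ioi (0 : ℝ), (if P t then (1 : ℝ) else 0) = volume.real ({t | P t} ∩ Ioi 0) := by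
  have hind : (fun t => if P t then (1 : ℝ) else 0) = {t | P t}.indicator 1 := by
    ext t
    simp [Set.indicator_apply]
  rw [hind, integral_indicator_one hP, measureReal_restrict_apply hP]

lemma setIntegral_Ioi_ite_lt {c : ℝ} (hc : 0 ≤ c) :
    ∫ t in Ioi (0 : ℝ), (if t < c then (1 : ℝ) else 0) = c := by
  rw [setIntegral_Ioi_ite_one measurableSet_Iio, inter_comm]
  exact (Real.volume_real_Ioo_of_le hc).trans (sub_zero c)

lemma measurable_measureReal_setOf_lt {α : Type*} [MeasurableSpace α] (μ : Measure α)
    (f : α → ℝ) : Measurable fun t => μ.real {y | t < f y} := by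
  have hanti : Antitone fun t => μ {y | t < f y} :=
    fun _ _ hst => measure_mono fun _ hy => lt_of_le_of_lt hst hy
  exact ENNReal.measurable_toReal.comp hanti.measurable

end LayerCake

section Steiner

lemma sdr_neg (f : ℝ → ℝ) (x : ℝ) : sdr f (-x) = sdr f x := by
  simp only [sdr, abs_neg]

lemma sdr_eq_measureReal (f : ℝ → ℝ) (x : ℝ) :
    sdr f x = volume.real ({t | 2 * |x| < volume.real {y | t < f y}} ∩ Ioi 0) :=
  setIntegral_Ioi_ite_one <|
    measurableSet_lt measurable_const (measurable_measureReal_setOf_lt volume f)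

lemma sdr_antitoneOn {f : ℝ → ℝ} (hf : BddAbove (range f)) : AntitoneOn (sdr f) (Ici 0) := by
  obtain ⟨M, hM⟩ := hf
  intro x₁ hx₁ x₂ hx₂ hx
  rw [sdr_eq_measureReal, sdr_eq_measureReal]
  -- above `M` the superlevel sets are empty, so only `t ∈ (0, M]` contributes
  have hbdd : {t | 2 * |x₁| < volume.real {y | t < f y}} ∩ Ioi 0 ⊆ Ioc 0 M := by
    rintro t ⟨ht, ht0⟩
    refine ⟨ht0, not_lt.mp fun hMt => ?_⟩
    have hempty : {y | t < f y} = ∅ :=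
      eq_empty_of_forall_notMem fun y hy => (hM (mem_range_self y)).not_gt (hMt.trans hy)
    simp only [mem_ofPred_eq, hempty, measureReal_empty] at ht
    linarith [abs_nonneg x₁]
  refine measureReal_mono ?_ ((measure_mono hbdd).trans_lt measure_Ioc_lt_top).ne
  rintro t ⟨ht, ht0⟩
  refine ⟨show 2 * |x₁| < _ from lt_of_le_of_lt ?_ ht, ht0⟩
  rw [abs_of_nonneg hx₁, abs_of_nonneg hx₂]
  linarith

lemma steiner_conj (g : ℂ → ℝ) (z : ℂ) : steiner g (conj z) = steiner g z := by
  simp only [steiner, Complex.conj_re, Complex.conj_im, sdr_neg]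

lemma comp_conj_of_steiner_eq_self {g : ℂ → ℝ} (hS : steiner g = g) : g ∘ conj = g := by
  ext z
  rw [Function.comp_apply, ← hS, steiner_conj]

lemma antitoneOn_vertical_of_steiner_eq_self {g : ℂ → ℝ} (hg : BddAbove (range g))
    (hS : steiner g = g) (x : ℝ) : AntitoneOn (fun y : ℝ => g (x + y * Complex.I)) (Ici 0) := by
  have hslice : BddAbove (range fun y : ℝ => g (x + y * Complex.I)) :=
    hg.mono (range_comp_subset_range _ g)
  intro y₁ hy₁ y₂ hy₂ hy
  rw [← hS]
  simpa [steiner] using sdr_antitoneOn hslice hy₁ hy₂ hy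

end Steiner

section Rotation

lemma rot_rot (a b : ℝ) (g : ℂ → ℝ) : rot a (rot b g) = rot (a + b) g := by
  ext z
  simp only [rot, ← mul_assoc, ← Complex.exp_add]
  congr 3
  push_cast
  ring

lemma rot_zero (g : ℂ → ℝ) : rot 0 g = g := by
  ext z
  simp [rot]

lemma rot_comp_conj (θ : ℝ) (g : ℂ → ℝ) : rot θ g ∘ conj = rot (-θ) (g ∘ conj) := by
  ext z
  simp only [rot, Function.comp_apply, map_mul, ← Complex.exp_conj, Complex.conj_ofReal,
    Complex.conj_I, Complex.ofReal_neg, neg_neg]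
  ring_nf

def rotStabilizer (g : ℂ → ℝ) : AddSubgroup ℝ where
  carrier := {θ | rot θ g = g}
  add_mem' {a b} (ha : rot a g = g) (hb : rot b g = g) :=
    show rot (a + b) g = g by rw [← rot_rot, hb, ha]
  zero_mem' := rot_zero g
  neg_mem' {a} (ha : rot a g = g) :=
    show rot (-a) g = g by conv_lhs => rw [← ha, rot_rot, neg_add_cancel, rot_zero]

lemma mem_rotStabilizer {g : ℂ → ℝ} {θ : ℝ} : θ ∈ rotStabilizer g ↔ rot θ g = g := Iff.rfl

lemma two_pi_mem_rotStabilizer (g : ℂ → ℝ) : 2 * Real.pi ∈ rotStabilizer g := by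
  ext z
  simp [rot, Complex.exp_neg]

lemma isClosed_rotStabilizer {g : ℂ → ℝ} (hg : Continuous g) :
    IsClosed (rotStabilizer g : Set ℝ) := by
  have hset : (rotStabilizer g : Set ℝ) = ⋂ z, {θ : ℝ | rot θ g z = g z} := by
    ext θ
    simp [mem_rotStabilizer, funext_iff]
  rw [hset]
  exact isClosed_iInter fun z => isClosed_eq (by unfold rot; fun_prop) continuous_const

lemma two_mul_mem_rotStabilizer {g : ℂ → ℝ} {α : ℝ} (hS : steiner g = g)
    (hα : steinerDir α g = g) : 2 * α ∈ rotStabilizer g := by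
  have hsym : rot (-α) g ∘ conj = rot (-α) g := by
    refine comp_conj_of_steiner_eq_self ?_
    simpa [steinerDir, rot_rot, rot_zero] using congrArg (rot (-α)) hα
  -- the reflections across the real axis and across the line at angle `α` compose to `rot (2α)`
  have hrot : rot (-α) g = rot α g := by
    rw [← hsym, rot_comp_conj, neg_neg, comp_conj_of_steiner_eq_self hS]
  rw [mem_rotStabilizer, two_mul, ← rot_rot, ← hrot, rot_rot, add_neg_cancel, rot_zero]

lemma AddSubgroup.dense_of_two_mul_mem {S : AddSubgroup ℝ} {p : ℝ} (hp : p ∈ S) {u : ℕ → ℝ}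
    (hu : ∀ j, 2 * u j ∈ S) (hne : ∀ j, (u j : AddCircle p) ≠ 0)
    (hlim : Tendsto (fun j => (u j : AddCircle p)) atTop (𝓝 0)) : Dense (S : Set ℝ) := by
  -- `v j` is the representative of `u j` closest to `0`
  set v : ℕ → ℝ := fun j => u j - round (p⁻¹ * u j) * p
  have hv_abs : ∀ j, |v j| = ‖(u j : AddCircle p)‖ := fun j => (AddCircle.norm_eq p).symm
  have hv_mem : ∀ j, 2 * v j ∈ S := fun j => by
    have : 2 * v j = 2 * u j - (2 * round (p⁻¹ * u j)) • p := by
      simp only [v, zsmul_eq_mul]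
      push_cast
      ring
    rw [this]
    exact S.sub_mem (hu j) (S.zsmul_mem hp _)
  have hv_pos : ∀ j, 0 < |2 * v j| := fun j => by
    rw [abs_mul, hv_abs]
    exact mul_pos (by norm_num) (norm_pos_iff.mpr (hne j))
  have hv_lim : Tendsto (fun j => |2 * v j|) atTop (𝓝 0) := by
    simpa [abs_mul, hv_abs] using (hlim.norm.const_mul 2)
  refine S.dense_of_not_isolated_zero fun ε hε => ?_
  obtain ⟨j, hj⟩ := (hv_lim.eventually (gt_mem_nhds hε)).exists
  exact ⟨|2 * v j|, abs_mem_iff.mpr (hv_mem j), hv_pos j, hj⟩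

lemma rot_eq_self_of_steinerDir_eq_self {g : ℂ → ℝ} (hg : Continuous g) (hS : steiner g = g)
    {α : ℕ → ℝ} (hα0 : ∀ j, (α j : AddCircle (2 * Real.pi)) ≠ 0)
    (hαlim : Tendsto (fun j => (α j : AddCircle (2 * Real.pi))) atTop (𝓝 0))
    (hinv : ∀ j, steinerDir (α j) g = g) (θ : ℝ) : rot θ g = g := by
  have hdense := AddSubgroup.dense_of_two_mul_mem (two_pi_mem_rotStabilizer g)
    (fun j => two_mul_mem_rotStabilizer hS (hinv j)) hα0 hαlim
  rw [← mem_rotStabilizer, ← SetLike.mem_coe, ← (isClosed_rotStabilizer hg).closure_eq,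
    hdense.closure_eq]
  trivial

lemma apply_eq_apply_of_norm_eq {g : ℂ → ℝ} (hrot : ∀ θ, rot θ g = g) {z w : ℂ}
    (hzw : ‖z‖ = ‖w‖) : g z = g w := by
  have hpolar : ∀ z : ℂ, g z = g ‖z‖ := fun z =>
    calc g z = g (Complex.exp (z.arg * Complex.I) * ‖z‖) := by
          rw [mul_comm, Complex.norm_mul_exp_arg_mul_I]
      _ = rot (-z.arg) g ‖z‖ := by simp [rot]
      _ = g ‖z‖ := by rw [hrot]
  rw [hpolar z, hpolar w, hzw]

end Rotation

section Radial

lemma Complex.volume_real_closedBall (a : ℂ) {r : ℝ} (hr : 0 ≤ r) :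
    volume.real (Metric.closedBall a r) = Real.pi * r ^ 2 := by
  simp [measureReal_def, ENNReal.toReal_ofReal hr, mul_comm]

variable {h : ℂ → ℝ}

lemma pi_mul_sq_lt_measureReal_iff (hc : Continuous h) (hs : HasCompactSupport h)
    (hrad : ∀ z : ℂ, h z = h ‖z‖) (hanti : AntitoneOn (fun r : ℝ => h r) (Ici 0))
    {t r : ℝ} (ht : 0 < t) (hr : 0 ≤ r) :
    Real.pi * r ^ 2 < volume.real {w | t < h w} ↔ t < h r := by
  constructor
  · intro hlt
    by_contra! hle
    have hsub : {w | t < h w} ⊆ Metric.closedBall 0 r := fun w hw => by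
      rw [mem_closedBall_zero_iff]
      by_contra! hgt
      have hw' : t < h ‖w‖ := hrad w ▸ hw
      linarith [hanti hr (norm_nonneg w) hgt.le]
    have hvol := measureReal_mono (μ := volume) hsub measure_closedBall_lt_top.ne
    rw [Complex.volume_real_closedBall 0 hr] at hvol
    linarith
  · intro htr
    have hfin : volume {w | t < h w} ≠ ⊤ := by
      refine ((measure_mono fun w hw => subset_tsupport h ?_).trans_lt
        hs.isCompact.measure_lt_top).ne
      exact (ht.trans hw).ne'
    obtain ⟨r', hrr', htr'⟩ :=
      (((hc.comp Complex.continuous_ofReal).tendsto r).eventually (lt_mem_nhds htr)).exists_gt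
    have hsub : Metric.closedBall 0 r' ⊆ {w | t < h w} := fun w hw => by
      rw [mem_closedBall_zero_iff] at hw
      rw [mem_ofPred_eq, hrad w]
      exact htr'.trans_le (hanti (norm_nonneg w) (hr.trans hrr'.le) hw)
    calc Real.pi * r ^ 2 < Real.pi * r' ^ 2 := by gcongr
      _ = volume.real (Metric.closedBall (0 : ℂ) r') :=
        (Complex.volume_real_closedBall 0 (hr.trans hrr'.le)).symm
      _ ≤ volume.real {w | t < h w} := measureReal_mono hsub hfin

lemma sdr2_eq_self_of_radial (hc : Continuous h) (hs : HasCompactSupport h) (h0 : ∀ z, 0 ≤ h z)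
    (hrad : ∀ z : ℂ, h z = h ‖z‖) (hanti : AntitoneOn (fun r : ℝ => h r) (Ici 0)) :
    sdr2 h = h := by
  ext z
  calc sdr2 h z = ∫ t in Ioi (0 : ℝ), if t < h ‖z‖ then (1 : ℝ) else 0 :=
        setIntegral_congr_fun measurableSet_Ioi fun t ht =>
          if_congr (pi_mul_sq_lt_measureReal_iff hc hs hrad hanti ht (norm_nonneg z)) rfl rfl
    _ = h ‖z‖ := setIntegral_Ioi_ite_lt (h0 _)
    _ = h z := (hrad z).symm

end Radial

theorem steiner_invariance_characterizes_sdr (h : ℂ → ℝ)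
    (hc : Continuous h) (hs : HasCompactSupport h) (h0 : ∀ z, 0 ≤ h z)
    (hS : steiner h = h)
    (α : ℕ → ℝ)
    (hα0 : ∀ j, ((α j : ℝ) : AddCircle (2 * Real.pi)) ≠ 0)
    (hαlim : Filter.Tendsto (fun j => ((α j : ℝ) : AddCircle (2 * Real.pi)))
      Filter.atTop (nhds 0))
    (hinv : ∀ j, steinerDir (α j) h = h) :
    h = sdr2 h := by
  have hrot := rot_eq_self_of_steinerDir_eq_self hc hS hα0 hαlim hinv
  have hrad : ∀ z : ℂ, h z = h ‖z‖ := fun z => apply_eq_apply_of_norm_eq hrot (by simp)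
  have hanti : AntitoneOn (fun r : ℝ => h r) (Ici 0) := by
    have hvertical := antitoneOn_vertical_of_steiner_eq_self
      (hc.bddAbove_range_of_hasCompactSupport hs) hS 0
    have hon_axis : ∀ r : ℝ, 0 ≤ r → h r = h ((0 : ℝ) + r * Complex.I) := fun r hr =>
      apply_eq_apply_of_norm_eq hrot (by simp [abs_of_nonneg hr])
    intro r₁ hr₁ r₂ hr₂ hr
    simpa only [hon_axis r₁ hr₁, hon_axis r₂ hr₂] using hvertical hr₁ hr₂ hr
  exact (sdr2_eq_self_of_radial hc hs h0 hrad hanti).symm
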